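/- Let H→ be an acyclic orientation of a simple graph H with source set S, let x ∈ S with |S ∖ {x}| ≥ 2, and let T be a width-one partial DAG tree decomposition with respect to S ∖ {x}. If (x, T) is not a good pair — i.e., for every leaf node ℓ of T with unique neighbor d in T, d is not an intersection-cover of x and ℓ — then the degree of x in the unique reachability graph UR_S is at least 2. -/

import Mathlib

/-- An acyclic orientation of a simple graph `H`: a relation `D` directing every
edge of `H` (and nothing else) with no directed cycle. -/
structure GraphOrientation {V : Type} (H : SimpleGraph V) : Type where
  D : V → V → Prop
  adj_of_rel : ∀ u v, D u v → H.Adj u v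
  rel_of_adj : ∀ u v, H.Adj u v → D u v ∨ D v u
  acyclic : ∀ v, ¬ Relation.TransGen D v v

namespace GraphOrientation

variable {V : Type} {H : SimpleGraph V}

/-- The set of sources of an acyclic orientation: vertices with no incoming edge. -/
def sources (O : GraphOrientation H) : Set V := {s | ∀ u, ¬ O.D u s}

/-- The set of vertices reachable from `s` by a directed path (including `s`). -/
def reach (O : GraphOrientation H) (s : V) : Set V := {v | Relation.ReflTransGen O.D s v}

/-- The set of vertices reachable from some vertex of `B`. -/
def reachSet (O : GraphOrientation H) (B : Set V) : Set V := ⋃ s ∈ B, O.reach s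

end GraphOrientation

/-- `tree` together with the bag assignment `bag` is a (partial) DAG tree
decomposition of the orientation `O` with respect to the vertex set `Sp`:
a finite tree whose bags are subsets of `Sp` whose union is `Sp`, such that
whenever a node `j` lies on the (unique) path between nodes `i` and `k`,
`reach(bag i) ∩ reach(bag k) ⊆ reach(bag j)`.
Taking `Sp = O.sources` gives the notion of a DAG tree decomposition of `O`. -/
def IsPDTD {V : Type} {H : SimpleGraph V} (O : GraphOrientation H) (Sp : Set V)
    {ι : Type} (tree : SimpleGraph ι) (bag : ι → Set V) : Prop :=
  Finite ι ∧ tree.IsTree ∧ (∀ i, bag i ⊆ Sp) ∧ (⋃ i, bag i) = Sp ∧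
    ∀ (i j k : ι) (p : tree.Walk i k), p.IsPath → j ∈ p.support →
      O.reachSet (bag i) ∩ O.reachSet (bag k) ⊆ O.reachSet (bag j)

/-- The width of a bag assignment: the maximum bag size. -/
noncomputable def bagWidth {V ι : Type} (bag : ι → Set V) : ℕ := ⨆ i, (bag i).ncard

/-- A width-one (partial) DAG tree decomposition: every bag is a singleton, and
distinct nodes carry distinct bags (so nodes may be identified with sources). -/
def IsWidthOnePDTD {V : Type} {H : SimpleGraph V} (O : GraphOrientation H) (Sp : Set V)
    {ι : Type} (tree : SimpleGraph ι) (bag : ι → Set V) : Prop :=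
  IsPDTD O Sp tree bag ∧ Function.Injective bag ∧ ∀ i, ∃ s : V, bag i = {s}

/-- `H` contains an induced cycle of length `n`. -/
def HasInducedCycleOfLength {V : Type} (H : SimpleGraph V) (n : ℕ) : Prop :=
  Nonempty (SimpleGraph.cycleGraph n ↪g H)

/-- The unique reachability graph of an orientation `O` over a set `Sp` of sources:
`s₁` and `s₂` are adjacent iff some vertex is reachable from both `s₁` and `s₂`
but from no other member of `Sp`. -/
def URGraph {V : Type} {H : SimpleGraph V} (O : GraphOrientation H) (Sp : Set V) :
    SimpleGraph V where
  Adj s₁ s₂ := s₁ ∈ Sp ∧ s₂ ∈ Sp ∧ s₁ ≠ s₂ ∧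
    ((O.reach s₁ ∩ O.reach s₂) \ O.reachSet (Sp \ {s₁, s₂})).Nonempty
  symm := by
    constructor
    rintro a b ⟨ha, hb, hab, hx⟩
    refine ⟨hb, ha, hab.symm, ?_⟩
    rwa [Set.inter_comm (O.reach b) (O.reach a), Set.pair_comm b a]
  loopless := by
    constructor
    rintro a ⟨-, -, h, -⟩
    exact h rfl

/-- `(x, (tree, bag))` is a good pair: some leaf `ℓ` of the width-one decomposition,
with unique neighbour `d`, satisfies `reach x ∩ reach ℓ ⊆ reach d`. -/
def GoodPair {V : Type} {H : SimpleGraph V} (O : GraphOrientation H)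
    {ι : Type} (tree : SimpleGraph ι) (bag : ι → Set V) (x : V) : Prop :=
  ∃ (i j : ι) (l d : V), tree.neighborSet i = {j} ∧ bag i = {l} ∧ bag j = {d} ∧
    O.reach x ∩ O.reach l ⊆ O.reach d


/-!
Every leaf `ℓ` of the width-one decomposition, with neighbour `d`, separates its bag from all
other bags, so the decomposition property gives `reach ℓ ∩ reach s ⊆ reach d` for every other
source `s ≠ x`. Since `(x, T)` is not a good pair, some vertex reachable from both `x` and `ℓ`
is not reachable from `d`, hence from no source other than `x` and `ℓ`: so `ℓ` is a neighbour
of `x` in `UR_S`. A tree on at least two nodes has two leaves, which carry distinct sources.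
-/

namespace SimpleGraph

variable {V : Type*} {G : SimpleGraph V}

lemma exists_neighborSet_eq_singleton_of_degree_eq_one {v : V} [Fintype (G.neighborSet v)]
    (h : G.degree v = 1) : ∃ w, G.neighborSet v = {w} := by
  obtain ⟨w, hw, huniq⟩ := degree_eq_one_iff_existsUnique_adj.1 h
  exact ⟨w, Set.eq_singleton_iff_unique_mem.2 ⟨hw, huniq⟩⟩

lemma Walk.mem_support_of_neighborSet_eq_singleton {u v w : V} (p : G.Walk u w) (huw : u ≠ w)
    (h : G.neighborSet u = {v}) : v ∈ p.support := by
  have hsnd : p.snd ∈ G.neighborSet u := p.adj_snd (Walk.not_nil_of_ne huw)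
  rw [h, Set.mem_singleton_iff] at hsnd
  exact hsnd ▸ p.getVert_mem_support 1

end SimpleGraph

namespace GraphOrientation

variable {V : Type} {H : SimpleGraph V} (O : GraphOrientation H)

@[simp]
lemma reachSet_singleton (s : V) : O.reachSet {s} = O.reach s := by
  simp [reachSet]

end GraphOrientation

section Decomposition

variable {V : Type} {H : SimpleGraph V} {O : GraphOrientation H} {Sp : Set V}
  {ι : Type} {tree : SimpleGraph ι} {bag : ι → Set V}

lemma IsPDTD.reachSet_inter_subset_of_neighborSet_eq_singleton
    (hT : IsPDTD O Sp tree bag) {i j k : ι} (hij : tree.neighborSet i = {j}) (hik : i ≠ k) :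
    O.reachSet (bag i) ∩ O.reachSet (bag k) ⊆ O.reachSet (bag j) := by
  obtain ⟨p, hp⟩ := hT.2.1.connected.exists_isPath i k
  exact hT.2.2.2.2 i j k p hp (p.mem_support_of_neighborSet_eq_singleton hik hij)

lemma IsPDTD.reachSet_inter_reachSet_diff_subset
    (hT : IsPDTD O Sp tree bag) {i j : ι} (hij : tree.neighborSet i = {j}) :
    O.reachSet (bag i) ∩ O.reachSet (Sp \ bag i) ⊆ O.reachSet (bag j) := by
  rintro v ⟨hvi, hv⟩
  obtain ⟨s, ⟨hsSp, hsi⟩, hvs⟩ := Set.mem_iUnion₂.1 hv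
  rw [← hT.2.2.2.1] at hsSp
  obtain ⟨k, hsk⟩ := Set.mem_iUnion.1 hsSp
  have hik : i ≠ k := by rintro rfl; exact hsi hsk
  exact hT.reachSet_inter_subset_of_neighborSet_eq_singleton hij hik
    ⟨hvi, Set.mem_biUnion hsk hvs⟩

end Decomposition

lemma URGraph_neighborSet_subset {V : Type} {H : SimpleGraph V} (O : GraphOrientation H)
    (Sp : Set V) (x : V) : (URGraph O Sp).neighborSet x ⊆ Sp \ {x} :=
  fun _ hy => ⟨hy.2.1, fun h => hy.2.2.1 h.symm⟩

lemma URGraph_adj_of_not_subset {V : Type} {H : SimpleGraph V} {O : GraphOrientation H}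
    {x l d : V} (hx : x ∈ O.sources) (hl : l ∈ O.sources \ {x})
    (hsep : O.reach l ∩ O.reachSet ((O.sources \ {x}) \ {l}) ⊆ O.reach d)
    (hxl : ¬ O.reach x ∩ O.reach l ⊆ O.reach d) :
    (URGraph O O.sources).Adj x l := by
  obtain ⟨v, ⟨hvx, hvl⟩, hvd⟩ := Set.not_subset.1 hxl
  refine ⟨hx, hl.1, fun h => hl.2 h.symm, v, ⟨hvx, hvl⟩, fun hv => hvd (hsep ⟨hvl, ?_⟩)⟩
  rwa [Set.sdiff_sdiff, ← Set.insert_eq]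

theorem degree_ge_two_of_not_goodPair_general {V : Type} (H : SimpleGraph V)
    (O : GraphOrientation H) (x : V) (hx : x ∈ O.sources)
    (h2 : 2 ≤ (O.sources \ {x}).ncard)
    {ι : Type} (tree : SimpleGraph ι) (bag : ι → Set V)
    (hT : IsWidthOnePDTD O (O.sources \ {x}) tree bag)
    (hng : ¬ GoodPair O tree bag x) :
    2 ≤ ((URGraph O O.sources).neighborSet x).ncard := by
  classical
  obtain ⟨hT, hinj, hsing⟩ := hT
  choose f hf using hsing
  have hf_inj : f.Injective := fun i k h => hinj (by rw [hf, hf, h])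
  have hrange : Set.range f = O.sources \ {x} := by
    rw [← hT.2.2.2.1]; simp [hf]
  have : Finite ι := hT.1
  have : Fintype ι := Fintype.ofFinite ι
  have : Nontrivial ι := Finite.one_lt_card_iff_nontrivial.1 <| by
    rw [← Set.ncard_range_of_injective hf_inj, hrange]; omega
  obtain ⟨i₁, i₂, hne, hi₁, hi₂⟩ := hT.2.1.exists_ne_and_degree_eq_one
  have leaf_adj : ∀ i, tree.degree i = 1 → (URGraph O O.sources).Adj x (f i) := by
    intro i hi
    obtain ⟨j, hj⟩ := SimpleGraph.exists_neighborSet_eq_singleton_of_degree_eq_one hi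
    refine URGraph_adj_of_not_subset hx (hrange ▸ Set.mem_range_self i) ?_
      fun h => hng ⟨i, j, f i, f j, hj, hf i, hf j, h⟩
    have hsep := hT.reachSet_inter_reachSet_diff_subset hj
    simp only [hf, GraphOrientation.reachSet_singleton] at hsep
    exact hsep
  have hfin : ((URGraph O O.sources).neighborSet x).Finite :=
    (Set.finite_of_ncard_pos (by omega)).subset (URGraph_neighborSet_subset O _ x)
  exact (Set.one_lt_ncard hfin).2 ⟨f i₁, leaf_adj i₁ hi₁, f i₂, leaf_adj i₂ hi₂, hf_inj.ne hne⟩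

/-- Let `x` be a source with `|S ∖ {x}| ≥ 2` and let `T` be a
width-one partial DAG tree decomposition with respect to `S ∖ {x}`, where `S` is
the source set.  If `(x, T)` is not a good pair, then `x` has degree at least 2 in
the unique reachability graph over `S`. -/
theorem degree_ge_two_of_not_goodPair {V : Type} [Fintype V] (H : SimpleGraph V)
    (O : GraphOrientation H) (x : V) (hx : x ∈ O.sources)
    (h2 : 2 ≤ (O.sources \ {x}).ncard)
    {ι : Type} (tree : SimpleGraph ι) (bag : ι → Set V)
    (hT : IsWidthOnePDTD O (O.sources \ {x}) tree bag)
    (hng : ¬ GoodPair O tree bag x) :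
    2 ≤ ((URGraph O O.sources).neighborSet x).ncard :=
  degree_ge_two_of_not_goodPair_general H O x hx h2 tree bag hT hng
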